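/- arXiv:1210.2540 — 3 statements merged into one kernel-verified Lean document; each statement's English description precedes it below -/
import Mathlib

section
/- Let C be a binary code of length n. Suppose that for every automorphism of C of odd prime order p, if the automorphism has c cycles of length p and f fixed points on the coordinates, then p does not divide c and f < p. Then for every odd prime p, p² does not divide the order of the automorphism group of C. -/
/-!
A subgroup `P ≤ G` of order `p²` is abelian, so every `τ ∈ P` permutes the fixed points of every
`σ ∈ P`. If `σ` has order `p`, it has fewer than `p` fixed points, and no permutation of fewer
than `p` points has order `p`; hence elements of order `p` in `P` fix the fixed points of one
another. A point moved by `σ` therefore has trivial stabilizer in `P` (otherwise some element of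
order `p` would fix it, and then so would `σ`), so `P` acts freely on the `c p` points moved by
`σ`, and `p² ∣ c p`, i.e. `p ∣ c`.
-/

open Finset MulAction

section FreeAction

variable {G X : Type*} [Group G] [MulAction G X]

theorem MulAction.card_dvd_card_of_stabilizer_eq_bot (h : ∀ x : X, stabilizer G x = ⊥) :
    Nat.card G ∣ Nat.card X := by
  rw [Nat.card_congr (selfEquivOrbitsQuotientProd h), Nat.card_prod]
  exact dvd_mul_left _ _

def SubMulAction.movedBy (g : G) (hg : ∀ h : G, Commute g h) : SubMulAction G X where
  carrier := (fixedBy X g)ᶜ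
  smul_mem' h x hx := by
    rw [← movedBy_mem_fixedBy_of_commute (hg h)]
    exact Set.smul_mem_smul_set hx

end FreeAction

namespace Equiv.Perm

variable {α : Type*} [Fintype α] [DecidableEq α] {p : ℕ}

theorem dvd_card_support_of_pow_prime_eq_one [Fact p.Prime] {σ : Perm α} (hσ : σ ^ p = 1) :
    p ∣ #σ.support := by
  rw [← sum_cycleType, cycleType_of_pow_prime_eq_one hσ, Multiset.sum_replicate, smul_eq_mul]
  exact dvd_mul_left _ _

theorem card_eq_card_support_div_mul_add_card_fixed {σ : Perm α} (h : p ∣ #σ.support) :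
    Fintype.card α = #σ.support / p * p + #{x | σ x = x} := by
  rw [Nat.div_mul_cancel h, add_comm, support, ← card_univ]
  exact (card_filter_add_card_filter_not _).symm

theorem eq_one_of_pow_prime_eq_one_of_card_lt (hp : p.Prime) {τ : Perm α} (hτ : τ ^ p = 1)
    (hcard : Fintype.card α < p) : τ = 1 := by
  have hord := hp.eq_one_or_self_of_dvd _ (orderOf_dvd_of_pow_eq_one hτ)
  refine orderOf_eq_one_iff.mp (hord.resolve_right fun h => ?_)
  have := orderOf_dvd_card (x := τ)
  rw [Fintype.card_perm, h, hp.dvd_factorial] at this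
  omega

theorem apply_eq_self_of_commute_of_card_fixed_lt (hp : p.Prime) {g h : Perm α}
    (hgh : Commute g h) (hh : h ^ p = 1) (hg : #{x | g x = x} < p) {x : α} (hx : g x = x) :
    h x = x := by
  have hinv : ∀ y, g (h y) = h y ↔ g y = y := fun y => by
    rw [← mul_apply, hgh.eq, mul_apply, apply_eq_iff_eq]
  have hres : h.subtypePerm (p := fun y => g y = y) hinv = 1 := by
    refine eq_one_of_pow_prime_eq_one_of_card_lt hp ?_ (by rwa [Fintype.card_subtype])
    rw [subtypePerm_pow]
    ext; simp [hh]
  simpa using congrArg (fun τ : Perm {y // g y = y} => (τ ⟨x, hx⟩ : α)) hres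

variable {P : Subgroup (Perm α)}

theorem stabilizer_eq_bot_of_apply_ne [Fact p.Prime] (hP : Nat.card P = p ^ 2)
    (hfix : ∀ τ ∈ P, orderOf τ = p → #{x | τ x = x} < p)
    {σ : Perm α} (hσP : σ ∈ P) (hσ : orderOf σ = p) {x : α} (hx : σ x ≠ x) :
    stabilizer P x = ⊥ := by
  by_contra hne
  have := (Subgroup.nontrivial_iff_ne_bot _).mpr hne
  obtain ⟨k, hk, hcard⟩ := ((IsPGroup.of_card hP).to_subgroup _).nontrivial_iff_card.mp this
  obtain ⟨τ, hτ⟩ := exists_prime_orderOf_dvd_card' p (hcard ▸ dvd_pow_self p hk.ne')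
  have hτord : orderOf ((τ : P) : Perm α) = p := by
    rw [Subgroup.orderOf_coe, Subgroup.orderOf_coe, hτ]
  have := IsPGroup.isMulCommutative_of_card_eq_prime_sq hP
  have hcomm : Commute ((τ : P) : Perm α) σ := congrArg Subtype.val (mul_comm' (τ : P) ⟨σ, hσP⟩)
  exact hx (apply_eq_self_of_commute_of_card_fixed_lt Fact.out hcomm (hσ ▸ pow_orderOf_eq_one σ)
    (hfix _ (τ : P).2 hτord) τ.2)

theorem sq_dvd_card_support_of_card_eq_sq [Fact p.Prime] (hP : Nat.card P = p ^ 2)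
    (hfix : ∀ τ ∈ P, orderOf τ = p → #{x | τ x = x} < p)
    {σ : Perm α} (hσP : σ ∈ P) (hσ : orderOf σ = p) : p ^ 2 ∣ #σ.support := by
  have := IsPGroup.isMulCommutative_of_card_eq_prime_sq hP
  let M : SubMulAction P α := .movedBy ⟨σ, hσP⟩ (mul_comm' _)
  have hM : Nat.card M = #σ.support := by
    rw [← Nat.card_eq_finsetCard]
    exact Nat.card_congr (Equiv.subtypeEquivRight fun x => by rw [mem_support]; rfl)
  rw [← hM, ← hP]
  refine card_dvd_card_of_stabilizer_eq_bot fun x => ?_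
  rw [SubMulAction.stabilizer_of_subMul]
  exact stabilizer_eq_bot_of_apply_ne hP hfix hσP hσ x.2

end Equiv.Perm

theorem odd_prime_square_not_dvd_aut_general (n : ℕ)
    (G : Subgroup (Equiv.Perm (Fin n)))
    (hcycles : ∀ σ ∈ G, ∀ p : ℕ, p.Prime → Odd p → orderOf σ = p →
      ∀ c f : ℕ, f = (Finset.univ.filter fun i => σ i = i).card → n = c * p + f →
        ¬ p ∣ c ∧ f < p) :
    ∀ p : ℕ, p.Prime → Odd p → ¬ p ^ 2 ∣ Nat.card G := by
  intro p hp hodd hdvd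
  have := Fact.mk hp
  -- `#σ.support / p` is the number `c` of `p`-cycles of `σ`
  have hcard_eq {σ : Equiv.Perm (Fin n)} (hσ : orderOf σ = p) :
      n = #σ.support / p * p + #{i | σ i = i} :=
    (Fintype.card_fin n).symm.trans <| Equiv.Perm.card_eq_card_support_div_mul_add_card_fixed
      (Equiv.Perm.dvd_card_support_of_pow_prime_eq_one (hσ ▸ pow_orderOf_eq_one σ))
  obtain ⟨H, hH⟩ := Sylow.exists_subgroup_card_pow_prime p hdvd
  set P := H.map G.subtype
  have hPG : P ≤ G := Subgroup.map_subtype_le H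
  have hP : Nat.card P = p ^ 2 := (Subgroup.card_map_of_injective G.subtype_injective).trans hH
  have hfix : ∀ τ ∈ P, orderOf τ = p → #{x | τ x = x} < p := fun τ hτ hord =>
    (hcycles τ (hPG hτ) p hp hodd hord _ _ rfl (hcard_eq hord)).2
  obtain ⟨σ, hσ⟩ := exists_prime_orderOf_dvd_card' (G := P) p (hP ▸ dvd_pow_self p two_ne_zero)
  rw [← Subgroup.orderOf_coe] at hσ
  have hsq := Equiv.Perm.sq_dvd_card_support_of_card_eq_sq hP hfix σ.2 hσ
  exact (hcycles σ (hPG σ.2) p hp hodd hσ _ _ rfl (hcard_eq hσ)).1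
    (Nat.dvd_div_of_mul_dvd (by rwa [← sq]))

/-- Proposition 4.1: Let `C` be a binary code of length `n` and `G` its automorphism group.
If for every automorphism of `C` of odd prime order `p` with `c` `p`-cycles and `f` fixed
points one has `p ∤ c` and `f < p`, then `p² ∤ |Aut(C)|` for every odd prime `p`. -/
theorem odd_prime_square_not_dvd_aut (n : ℕ) (C : Set (Fin n → ZMod 2))
    (G : Subgroup (Equiv.Perm (Fin n)))
    (hG : ∀ σ : Equiv.Perm (Fin n), σ ∈ G ↔ ∀ v : Fin n → ZMod 2, v ∈ C ↔ (v ∘ σ) ∈ C)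
    (hcycles : ∀ σ ∈ G, ∀ p : ℕ, p.Prime → Odd p → orderOf σ = p →
      ∀ c f : ℕ, f = (Finset.univ.filter fun i => σ i = i).card → n = c * p + f →
        ¬ p ∣ c ∧ f < p) :
    ∀ p : ℕ, p.Prime → Odd p → ¬ p ^ 2 ∣ Nat.card G :=
  odd_prime_square_not_dvd_aut_general n G hcycles
end

section
/- Let G be a group of order p² (p prime) acting faithfully on a finite set of size n, such that every element of order p has fewer than p fixed points and the number of p-cycles of every element of order p is not divisible by p. Then no such group G exists; equivalently, if every element of prime order p in a permutation group has fewer than p fixed points and a number of p-cycles not divisible by p, then p² does not divide the group order. -/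
/-!
A subgroup `H ≤ G` of order `p²` is abelian, so an element of a stabilizer of order `p` fixes
the whole orbit, which has `p` points; hence every stabilizer in `H` is trivial or all of `H`.
Then all nontrivial elements of `H` fix exactly the `H`-fixed points, and Burnside's lemma
shows that `p²` divides the number of points moved by any of them. For `τ ∈ H` of order `p`
this number is `c * p`, with `c` the number of `p`-cycles of `τ`, so `p ∣ c`.
-/

namespace MulAction

variable {H α : Type*} [Group H] [MulAction H α]

theorem orbit_subset_fixedBy_of_mem_center {g : H} {x : α} (hc : g ∈ Subgroup.center H)
    (hx : g ∈ stabilizer H x) : orbit H x ⊆ fixedBy α g := by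
  rintro _ ⟨h, rfl⟩
  rw [mem_fixedBy, smul_smul, ← Subgroup.mem_center_iff.mp hc, mul_smul, mem_stabilizer_iff.mp hx]

theorem stabilizer_eq_bot_or_eq_top_of_card_eq_prime_sq [Finite α] {p : ℕ} [hp : Fact p.Prime]
    (hH : Nat.card H = p ^ 2) (hfix : ∀ g : H, orderOf g = p → (fixedBy α g).ncard < p)
    (x : α) : stabilizer H x = ⊥ ∨ stabilizer H x = ⊤ := by
  have : Finite H := Nat.finite_of_card_ne_zero (hH ▸ pow_ne_zero 2 hp.out.ne_zero)
  obtain ⟨k, hk, hcard⟩ := (Nat.dvd_prime_pow hp.out).mp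
    (hH ▸ Subgroup.card_subgroup_dvd_card (stabilizer H x))
  interval_cases k
  · exact .inl (Subgroup.card_eq_one.mp hcard)
  · rw [pow_one] at hcard
    obtain ⟨⟨g, hgx⟩, hg⟩ := exists_prime_orderOf_dvd_card' p hcard.symm.dvd
    have hcenter : g ∈ Subgroup.center H := by
      have := IsPGroup.isMulCommutative_of_card_eq_prime_sq hH
      simp [Subgroup.center_eq_top]
    have horbit : (orbit H x).ncard = p := by
      have := (stabilizer H x).index_mul_card
      rw [hcard, hH, index_stabilizer] at this
      exact Nat.eq_of_mul_eq_mul_right hp.out.pos (by rw [this, sq])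
    have := Set.ncard_le_ncard (orbit_subset_fixedBy_of_mem_center hcenter hgx)
    exact absurd (hfix g (by simpa using hg)) (by omega)
  · exact .inr (Subgroup.eq_top_of_card_eq _ (hcard.trans hH.symm))

theorem fixedBy_eq_fixedPoints_of_stabilizer_eq_bot_or_eq_top
    (hstab : ∀ x : α, stabilizer H x = ⊥ ∨ stabilizer H x = ⊤) (g : H) (hg : g ≠ 1) :
    fixedBy α g = fixedPoints H α := by
  refine Set.Subset.antisymm (fun x hx h => ?_) (fun x hx => hx g)
  have hgx : g ∈ stabilizer H x := hx
  have htop : stabilizer H x = ⊤ :=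
    (hstab x).resolve_left fun hbot => hg (by rwa [hbot, Subgroup.mem_bot] at hgx)
  exact (htop ▸ Subgroup.mem_top h : h ∈ stabilizer H x)

theorem card_dvd_card_sub_card_fixedPoints [Finite H] [Finite α]
    (hfix : ∀ g : H, g ≠ 1 → fixedBy α g = fixedPoints H α) :
    Nat.card H ∣ Nat.card α - Nat.card (fixedPoints H α) := by
  classical
  have := Fintype.ofFinite H
  have := Fintype.ofFinite α
  have := Fintype.ofFinite (orbitRel.Quotient H α)
  have burnside := sum_card_fixedBy_eq_card_orbits_mul_card_group H α
  simp only [← Nat.card_eq_fintype_card] at burnside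
  rw [Fintype.sum_eq_add_sum_compl 1, fixedBy_one_eq_univ, Nat.card_univ,
    Finset.sum_congr rfl fun g hg => by rw [hfix g (by simpa using hg)], Finset.sum_const,
    Finset.card_compl, Finset.card_singleton, smul_eq_mul, Fintype.card_eq_nat_card] at burnside
  have hle : Nat.card (fixedPoints H α) ≤ Nat.card α := Finite.card_subtype_le _
  have hpos : 1 ≤ Nat.card H := Nat.card_pos
  have key : Nat.card α - Nat.card (fixedPoints H α) + Nat.card H * Nat.card (fixedPoints H α) =
      Nat.card (orbitRel.Quotient H α) * Nat.card H := by
    zify [hle, hpos] at burnside ⊢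
    linarith
  exact (Nat.dvd_add_left (dvd_mul_right _ _)).mp (key ▸ dvd_mul_left _ _)

theorem prime_sq_dvd_card_sub_ncard_fixedBy [Finite α] {p : ℕ} [hp : Fact p.Prime]
    (hH : Nat.card H = p ^ 2) (hfix : ∀ g : H, orderOf g = p → (fixedBy α g).ncard < p)
    (g : H) (hg : g ≠ 1) : p ^ 2 ∣ Nat.card α - (fixedBy α g).ncard := by
  have : Finite H := Nat.finite_of_card_ne_zero (hH ▸ pow_ne_zero 2 hp.out.ne_zero)
  have hstab := stabilizer_eq_bot_or_eq_top_of_card_eq_prime_sq hH hfix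
  have hfixedBy := fixedBy_eq_fixedPoints_of_stabilizer_eq_bot_or_eq_top hstab
  rw [← hH, ← Nat.card_coe_set_eq, hfixedBy g hg]
  exact card_dvd_card_sub_card_fixedPoints hfixedBy

end MulAction

open MulAction

theorem Equiv.Perm.card_eq_card_cycleType_mul_add_card_fixed {α : Type*} [Fintype α]
    [DecidableEq α] {σ : Equiv.Perm α} {p : ℕ} (hσ : orderOf σ = p) (hp : p.Prime) :
    Fintype.card α =
      Multiset.card σ.cycleType * p + (Finset.univ.filter fun x => σ x = x).card := by
  obtain ⟨n, hn⟩ := σ.cycleType_prime_order (hσ ▸ hp)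
  have hsum : σ.cycleType.sum = Multiset.card σ.cycleType * p := by
    rw [hn, Multiset.sum_replicate, Multiset.card_replicate, hσ, smul_eq_mul]
  rw [← hsum, Equiv.Perm.sum_cycleType, ← Finset.card_add_card_compl σ.support]
  congr
  ext x; simp

/-- Group-theoretic core of Proposition 4.1: if every element of prime order `p` in a
permutation group `G` on a finite set `α` has fewer than `p` fixed points and a number of
`p`-cycles not divisible by `p`, then `p²` does not divide `|G|`. -/
theorem p_squared_not_dvd_of_fixed_points_lt {α : Type*} [Fintype α] [DecidableEq α]
    (G : Subgroup (Equiv.Perm α)) (p : ℕ) (hp : p.Prime)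
    (h : ∀ σ ∈ G, orderOf σ = p →
      ∀ c f : ℕ, f = (Finset.univ.filter fun i => σ i = i).card →
        Fintype.card α = c * p + f → f < p ∧ ¬ p ∣ c) :
    ¬ p ^ 2 ∣ Nat.card G := by
  have : Fact p.Prime := ⟨hp⟩
  intro hdvd
  obtain ⟨K, hK⟩ := Sylow.exists_subgroup_card_pow_prime p hdvd
  have hfixedBy (g : K) : (fixedBy α g).ncard =
      (Finset.univ.filter fun i => (g : Equiv.Perm α) i = i).card := by
    rw [Set.ncard_eq_toFinset_card']
    congr
    ext; simp [Subgroup.smul_def, Equiv.Perm.smul_def]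
  have hord (g : K) : orderOf ((g : G) : Equiv.Perm α) = orderOf g := by
    rw [Subgroup.orderOf_coe, Subgroup.orderOf_coe]
  have hcount {g : K} (hg : orderOf g = p) :=
    Equiv.Perm.card_eq_card_cycleType_mul_add_card_fixed ((hord g).trans hg) hp
  have hcycles {g : K} (hg : orderOf g = p) :=
    h _ (g : G).2 ((hord g).trans hg) _ _ rfl (hcount hg)
  obtain ⟨τ, hτ⟩ := exists_prime_orderOf_dvd_card' p (hK ▸ dvd_pow_self p two_ne_zero)
  have hτ1 : τ ≠ 1 := by rintro rfl; exact hp.one_lt.ne' (hτ ▸ orderOf_one)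
  have hmoved := prime_sq_dvd_card_sub_ncard_fixedBy hK (fun g hg => hfixedBy g ▸ (hcycles hg).1)
    τ hτ1
  rw [Nat.card_eq_fintype_card, hfixedBy, hcount hτ, Nat.add_sub_cancel, sq] at hmoved
  exact (hcycles hτ).2 (Nat.dvd_of_mul_dvd_mul_right hp.pos hmoved)
end

section
/- Let G be a finite group of order 2^a·3·5·29 with 0 ≤ a ≤ 3 such that G has no element of order 3·29, no element of order 5·29, and no element of order 2·29, and any nonabelian composition factor of G is A₅. Then no such G exists. -/
/-!
Replace `G` by a subgroup `H` minimal among those of order divisible by `3·5·29`. The excluded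
element orders make every element `g` of order 29 self-centralizing: `|C_H(g)| = 29`.

Then `H` is simple. A normal subgroup `N` of order prime to 29 has `|N| ≡ |C_N(g)| = 1 (mod 29)`
and `|N| ∣ 120`, so `|N| ∈ {1, 30}`; and `|N| = 30` is impossible, since `⟨g⟩` would permute the
29 nontrivial elements of `N` transitively although `N` has elements of orders 2 and 3. If
`29 ∣ |N|`, then `N` has 1 or 30 Sylow 29-subgroups. A unique one would be normal in `H` of order
29, hence centralized by an element of order 3 (as `29 ≢ 1 (mod 3)`), which cannot lie in a
centralizer of order 29; 30 of them force `435 ∣ |N|`, so `N = H` by minimality.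

Being simple and nonabelian, `H` is `A₅` by hypothesis, whose order 60 is prime to 29.
-/

open Subgroup MulAction

section

variable {G : Type*} [Group G]

namespace Subgroup

def conjAct (P : Subgroup G) : Subgroup (ConjAct G) :=
  P.map (ConjAct.toConjAct : G ≃* ConjAct G).toMonoidHom

theorem _root_.IsPGroup.conjAct {p : ℕ} {P : Subgroup G} (hP : IsPGroup p P) :
    IsPGroup p P.conjAct :=
  hP.map _

theorem mem_fixedPoints_conjAct_iff {P N : Subgroup G} [N.Normal] (x : N) :
    x ∈ fixedPoints P.conjAct N ↔ (x : G) ∈ centralizer P := by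
  rw [mem_centralizer_iff]
  constructor
  · intro h y hy
    exact mul_inv_eq_iff_eq_mul.mp
      (congrArg Subtype.val (h ⟨ConjAct.toConjAct y, mem_map_of_mem _ hy⟩))
  · rintro h ⟨_, y, hy, rfl⟩
    exact Subtype.ext (show y * x * y⁻¹ = x by rw [h y hy, mul_inv_cancel_right])

theorem _root_.IsPGroup.card_modEq_card_inf_centralizer [Finite G] {p : ℕ} [Fact p.Prime]
    {P : Subgroup G} (hP : IsPGroup p P) (N : Subgroup G) [N.Normal] :
    Nat.card N ≡ Nat.card ↥(N ⊓ centralizer P) [MOD p] := by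
  have e : fixedPoints P.conjAct N ≃ ↥(N ⊓ centralizer P) :=
    { toFun := fun x => ⟨x.1, x.1.2, (mem_fixedPoints_conjAct_iff x.1).mp x.2⟩
      invFun := fun y => ⟨⟨y, y.2.1⟩, (mem_fixedPoints_conjAct_iff _).mpr y.2.2⟩
      left_inv := fun _ => rfl
      right_inv := fun _ => rfl }
  rw [← Nat.card_congr e]
  exact hP.conjAct.card_modEq_card_fixedPoints N

theorem le_centralizer_of_card_eq_prime [Finite G] {p q : ℕ} [Fact p.Prime] (hq : q.Prime)
    {P M : Subgroup G} [M.Normal] (hP : IsPGroup p P) (hM : Nat.card M = q)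
    (hqp : ¬ q ≡ 1 [MOD p]) : M ≤ centralizer P := by
  have hdvd : Nat.card ↥(M ⊓ centralizer P) ∣ q := hM ▸ card_dvd_of_le inf_le_left
  rcases hq.eq_one_or_self_of_dvd _ hdvd with h1 | hq'
  · exact absurd (hM ▸ h1 ▸ hP.card_modEq_card_inf_centralizer M) hqp
  · exact inf_eq_left.mp (eq_of_le_of_card_ge inf_le_left (by rw [hq', hM]))

theorem orderOf_eq_of_inf_centralizer_eq_bot [Finite G] {p : ℕ} [Fact p.Prime]
    {P N : Subgroup G} [N.Normal] (hP : IsPGroup p P) (hfree : N ⊓ centralizer P = ⊥)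
    (hN : Nat.card N = p + 1) {x y : N} (hx : x ≠ 1) (hy : y ≠ 1) :
    orderOf x = orderOf y := by
  have hsub : orbit P.conjAct x ⊆ {1}ᶜ := by
    rintro _ ⟨c, rfl⟩
    exact ((MulDistribMulAction.toMulEquiv N (c : ConjAct G)).map_ne_one_iff).mpr hx
  have hcompl : ({1}ᶜ : Set N).ncard = p :=
    Set.ncard_compl_of_ncard_eq_add _ (by rw [hN, Set.ncard_singleton])
  obtain ⟨m, hm⟩ := hP.conjAct.card_orbit (α := N) x
  have hm0 : m ≠ 0 := by
    rintro rfl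
    have hfix : x ∈ fixedPoints P.conjAct N := subsingleton_orbit_iff_mem_fixedPoints.mp
      ((Set.subsingleton_coe _).mp (Nat.card_eq_one_iff_unique.mp (hm.trans (pow_zero p))).1)
    have hxC : (x : G) ∈ N ⊓ centralizer P := ⟨x.2, (mem_fixedPoints_conjAct_iff x).mp hfix⟩
    rw [hfree] at hxC
    exact hx (Subtype.ext hxC)
  have horbit : orbit P.conjAct x = {1}ᶜ := by
    refine Set.eq_of_subset_of_ncard_le hsub ?_
    rw [hcompl, ← Nat.card_coe_set_eq, hm]
    exact Nat.le_self_pow hm0 p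
  obtain ⟨c, hc⟩ : y ∈ orbit P.conjAct x := horbit ▸ hy
  rw [← hc]
  exact ((MulDistribMulAction.toMulEquiv N (c : ConjAct G)).orderOf_eq x).symm

theorem eq_top_of_minimal {P : Subgroup G → Prop} {H : Subgroup G} (hH : Minimal P H)
    {N : Subgroup H} (hN : P (N.map H.subtype)) : N = ⊤ :=
  eq_top_iff.mpr fun x _ =>
    (mem_map_iff_mem H.subtype_injective).mp (hH.2 hN (map_subtype_le N) x.2)

end Subgroup

theorem Sylow.card_eq_of_not_sq_dvd [Finite G] {p : ℕ} [Fact p.Prime] (P : Sylow p G)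
    (hp : p ∣ Nat.card G) (hp2 : ¬ p ^ 2 ∣ Nat.card G) : Nat.card P = p := by
  have hG : Nat.card G ≠ 0 := Nat.card_pos.ne'
  have h1 := (Nat.Prime.pow_dvd_iff_le_factorization Fact.out hG).mp (pow_one p ▸ hp)
  have h2 := mt (Nat.Prime.pow_dvd_iff_le_factorization (k := 2) Fact.out hG).mpr hp2
  rw [P.card_eq_multiplicity, show (Nat.card G).factorization p = 1 by omega, pow_one]

theorem exists_orderOf_eq_mul_of_dvd_card_centralizer [Finite G] {q : ℕ} [Fact q.Prime] {g : G}
    (hq : q ∣ Nat.card (centralizer (zpowers g : Set G))) (hqg : ¬ q ∣ orderOf g) :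
    ∃ x : G, orderOf x = q * orderOf g := by
  obtain ⟨x, hx⟩ := exists_prime_orderOf_dvd_card' q hq
  have hcomm : Commute (x : G) g := (mem_centralizer_iff.mp x.2 g (mem_zpowers g)).symm
  have hcop : (orderOf (x : G)).Coprime (orderOf g) := by
    rw [orderOf_coe, hx]
    exact (Nat.Prime.coprime_iff_not_dvd Fact.out).mpr hqg
  exact ⟨x * g, by rw [hcomm.orderOf_mul_eq_mul_orderOf_of_coprime hcop, orderOf_coe, hx]⟩

end

private theorem eq_one_or_eq_thirty_of_dvd_120 {n : ℕ} (h : n ∣ 120) (h1 : n ≡ 1 [MOD 29]) :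
    n = 1 ∨ n = 30 := by
  have : n ≤ 120 := Nat.le_of_dvd (by norm_num) h
  unfold Nat.ModEq at h1
  interval_cases n <;> omega

private theorem eq_29_of_dvd_3480 {m : ℕ} (h : m ∣ 3480) (h29 : 29 ∣ m) (h2 : ¬ 2 ∣ m)
    (h3 : ¬ 3 ∣ m) (h5 : ¬ 5 ∣ m) : m = 29 := by
  obtain ⟨k, rfl⟩ := h29
  have hk : k ∣ 120 := Nat.dvd_of_mul_dvd_mul_left (by norm_num) (h.trans (by norm_num))
  have : k ≤ 120 := Nat.le_of_dvd (by norm_num) hk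
  interval_cases k <;> omega

section Order3480

variable {K : Type*} [Group K] [Finite K]

local instance : Fact (Nat.Prime 5) := ⟨by norm_num⟩

local instance : Fact (Nat.Prime 29) := ⟨by norm_num⟩

theorem card_centralizer_zpowers_eq_29 (hK : Nat.card K ∣ 3480)
    (h58 : ∀ x : K, orderOf x ≠ 2 * 29) (h87 : ∀ x : K, orderOf x ≠ 3 * 29)
    (h145 : ∀ x : K, orderOf x ≠ 5 * 29) {g : K} (hg : orderOf g = 29) :
    Nat.card (centralizer (zpowers g : Set K)) = 29 := by
  have hgC : g ∈ centralizer (zpowers g : Set K) := mem_centralizer_iff.mpr fun h hh => by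
    obtain ⟨k, rfl⟩ := mem_zpowers_iff.mp hh
    exact ((Commute.refl g).zpow_left k).eq
  have hnot (q : ℕ) [Fact q.Prime] (hq : q ≠ 29) (hforb : ∀ x : K, orderOf x ≠ q * 29) :
      ¬ q ∣ Nat.card (centralizer (zpowers g : Set K)) := fun hdvd => by
    obtain ⟨x, hx⟩ := exists_orderOf_eq_mul_of_dvd_card_centralizer hdvd
      (by rw [hg]; exact (Nat.prime_dvd_prime_iff_eq Fact.out (by norm_num)).not.mpr hq)
    exact hforb x (hg ▸ hx)
  exact eq_29_of_dvd_3480 ((card_subgroup_dvd_card _).trans hK)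
    (hg ▸ orderOf_dvd_natCard _ hgC) (hnot 2 (by norm_num) h58) (hnot 3 (by norm_num) h87)
    (hnot 5 (by norm_num) h145)

theorem card_ne_29_of_normal
    (hC : ∀ g : K, orderOf g = 29 → Nat.card (centralizer (zpowers g : Set K)) = 29)
    (h3 : 3 ∣ Nat.card K) (M : Subgroup K) [M.Normal] : Nat.card M ≠ 29 := fun hM => by
  obtain ⟨t, ht⟩ := exists_prime_orderOf_dvd_card' 3 h3
  have ht3 : IsPGroup 3 (zpowers t) :=
    IsPGroup.of_card (n := 1) (by rw [Nat.card_zpowers, ht, pow_one])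
  have hMt : M ≤ centralizer (zpowers t : Set K) :=
    le_centralizer_of_card_eq_prime (by norm_num) ht3 hM (by decide)
  obtain ⟨y, hy⟩ := exists_prime_orderOf_dvd_card' (G := M) 29 hM.symm.dvd
  have hyM : zpowers (y : K) = M := eq_of_le_of_card_ge (zpowers_le.mpr y.2)
    (by rw [Nat.card_zpowers, orderOf_coe, hy, hM])
  rw [← hyM] at hMt
  have h329 := card_dvd_of_le (le_centralizer_iff.mp hMt)
  rw [hC _ (by rw [orderOf_coe, hy]), Nat.card_zpowers, ht] at h329
  norm_num at h329

theorem eq_bot_of_normal_of_not_dvd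
    (hC : ∀ g : K, orderOf g = 29 → Nat.card (centralizer (zpowers g : Set K)) = 29)
    (hK : Nat.card K ∣ 3480) (h29 : 29 ∣ Nat.card K) (N : Subgroup K) [N.Normal]
    (hN : ¬ 29 ∣ Nat.card N) : N = ⊥ := by
  obtain ⟨g, hg⟩ := exists_prime_orderOf_dvd_card' 29 h29
  have hg29 : IsPGroup 29 (zpowers g) :=
    IsPGroup.of_card (n := 1) (by rw [Nat.card_zpowers, hg, pow_one])
  have hfree : N ⊓ centralizer (zpowers g : Set K) = ⊥ := by
    have hdvd : Nat.card ↥(N ⊓ centralizer (zpowers g : Set K)) ∣ 29 :=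
      hC g hg ▸ card_dvd_of_le inf_le_right
    rcases (Nat.dvd_prime Fact.out).mp hdvd with h1 | h29
    · exact eq_bot_of_card_eq _ h1
    · exact absurd (h29 ▸ card_dvd_of_le inf_le_left) hN
  have hmod := hg29.card_modEq_card_inf_centralizer N
  rw [hfree, card_bot] at hmod
  have h120 : Nat.card N ∣ 120 :=
    Nat.Coprime.dvd_of_dvd_mul_right ((Nat.Prime.coprime_iff_not_dvd Fact.out).mpr hN).symm
      ((card_subgroup_dvd_card N).trans hK)
  rcases eq_one_or_eq_thirty_of_dvd_120 h120 hmod with h1 | h30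
  · exact eq_bot_of_card_eq N h1
  · obtain ⟨x, hx⟩ := exists_prime_orderOf_dvd_card' (G := N) 2 (by rw [h30]; norm_num)
    obtain ⟨y, hy⟩ := exists_prime_orderOf_dvd_card' (G := N) 3 (by rw [h30]; norm_num)
    have := orderOf_eq_of_inf_centralizer_eq_bot hg29 hfree h30
      (x := x) (y := y) (by rintro rfl; simp at hx) (by rintro rfl; simp at hy)
    omega

theorem eq_top_of_normal_of_dvd
    (hC : ∀ g : K, orderOf g = 29 → Nat.card (centralizer (zpowers g : Set K)) = 29)
    (hK : Nat.card K ∣ 3480) (h3 : 3 ∣ Nat.card K)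
    (hmin : ∀ H : Subgroup K, 435 ∣ Nat.card H → H = ⊤) (N : Subgroup K) [N.Normal]
    (hN : 29 ∣ Nat.card N) : N = ⊤ := by
  have hN3480 : Nat.card N ∣ 3480 := (card_subgroup_dvd_card N).trans hK
  obtain ⟨Q⟩ : Nonempty (Sylow 29 N) := inferInstance
  have hQ : Nat.card Q = 29 :=
    Q.card_eq_of_not_sq_dvd hN fun h => by have := h.trans hN3480; norm_num at this
  have hindex : 29 * (Q : Subgroup N).index = Nat.card N := by
    rw [← card_mul_index (Q : Subgroup N), hQ]
  have hindex120 : (Q : Subgroup N).index ∣ 120 :=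
    Nat.dvd_of_mul_dvd_mul_left (by norm_num : 0 < 29) (by rw [hindex]; exact hN3480)
  have hsylow : Nat.card (Sylow 29 N) ∣ 120 := Q.card_dvd_index.trans hindex120
  rcases eq_one_or_eq_thirty_of_dvd_120 hsylow (card_sylow_modEq_one 29 N) with h1 | h30
  · have : Subsingleton (Sylow 29 N) := (Nat.card_eq_one_iff_unique.mp h1).1
    exact absurd ((card_map_of_injective N.subtype_injective).trans hQ)
      (card_ne_29_of_normal hC h3 ((Q : Subgroup N).map N.subtype))
  · apply hmin
    rw [← hindex]
    exact (by norm_num : 435 ∣ 29 * 30).trans (Nat.mul_dvd_mul_left 29 (h30 ▸ Q.card_dvd_index))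

theorem isSimpleGroup_of_minimal
    (hC : ∀ g : K, orderOf g = 29 → Nat.card (centralizer (zpowers g : Set K)) = 29)
    (hK : Nat.card K ∣ 3480) (h435 : 435 ∣ Nat.card K)
    (hmin : ∀ H : Subgroup K, 435 ∣ Nat.card H → H = ⊤) : IsSimpleGroup K := by
  have : Nontrivial K := Finite.one_lt_card_iff_nontrivial.mp
    (lt_of_lt_of_le (by norm_num) (Nat.le_of_dvd Nat.card_pos h435))
  refine ⟨fun N _ => ?_⟩
  by_cases hN : 29 ∣ Nat.card N
  · exact .inr (eq_top_of_normal_of_dvd hC hK ((by norm_num : 3 ∣ 435).trans h435) hmin N hN)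
  · exact .inl (eq_bot_of_normal_of_not_dvd hC hK ((by norm_num : 29 ∣ 435).trans h435) N hN)

theorem not_forall_mul_comm
    (hC : ∀ g : K, orderOf g = 29 → Nat.card (centralizer (zpowers g : Set K)) = 29)
    (h435 : 435 ∣ Nat.card K) : ¬ ∀ x y : K, x * y = y * x := fun hcomm => by
  obtain ⟨g, hg⟩ := exists_prime_orderOf_dvd_card' 29 ((by norm_num : 29 ∣ 435).trans h435)
  have htop : centralizer (zpowers g : Set K) = ⊤ :=
    eq_top_iff.mpr fun x _ => mem_centralizer_iff.mpr fun h _ => hcomm h x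
  have h29 := hC g hg
  rw [htop, card_top] at h29
  rw [h29] at h435
  norm_num at h435

end Order3480

/-- Core of Proposition 5.5 a): there is no finite group of order `2^a·3·5·29` (`0 ≤ a ≤ 3`)
without elements of order `3·29`, `5·29` and `2·29` all of whose nonabelian simple
composition factors are `A₅`. -/
theorem no_group_of_order_2a_3_5_29 (G : Type*) [Group G] [Finite G] (a : ℕ) (ha : a ≤ 3)
    (hord : Nat.card G = 2 ^ a * 3 * 5 * 29)
    (h387 : ∀ g : G, orderOf g ≠ 3 * 29)
    (h545 : ∀ g : G, orderOf g ≠ 5 * 29)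
    (h58 : ∀ g : G, orderOf g ≠ 2 * 29)
    (hcf : ∀ (H : Subgroup G) (N : Subgroup H) (hN : N.Normal),
      haveI := hN
      IsSimpleGroup (H ⧸ N) →
      (¬ ∀ x y : H ⧸ N, x * y = y * x) → Nonempty ((H ⧸ N) ≃* alternatingGroup (Fin 5))) :
    False := by
  have hG : Nat.card G ∣ 3480 := hord ▸ Nat.mul_dvd_mul_right (Nat.mul_dvd_mul_right
    (Nat.mul_dvd_mul_right (Nat.pow_dvd_pow 2 ha) 3) 5) 29
  obtain ⟨H, hH⟩ := exists_minimal_of_wellFoundedLT (fun H : Subgroup G => 435 ∣ Nat.card H)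
    ⟨⊤, by rw [card_top, hord]; exact Dvd.intro_left (2 ^ a) (by ring)⟩
  have hHK : Nat.card H ∣ 3480 := (card_subgroup_dvd_card H).trans hG
  have hC (g : H) (hg : orderOf g = 29) : Nat.card (centralizer (zpowers g : Set H)) = 29 :=
    card_centralizer_zpowers_eq_29 hHK (fun x => orderOf_coe x ▸ h58 x)
      (fun x => orderOf_coe x ▸ h387 x) (fun x => orderOf_coe x ▸ h545 x) hg
  have hmin (N : Subgroup H) (hN : 435 ∣ Nat.card N) : N = ⊤ :=
    eq_top_of_minimal hH (by rwa [card_map_of_injective H.subtype_injective])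
  have := isSimpleGroup_of_minimal hC hHK hH.1 hmin
  obtain ⟨e⟩ := hcf H ⊥ inferInstance QuotientGroup.quotientBot.isSimpleGroup fun hcomm =>
    not_forall_mul_comm hC hH.1 fun x y =>
      QuotientGroup.quotientBot.symm.injective (by simp [hcomm])
  have h60 : Nat.card H = 60 := by
    rw [Nat.card_congr (QuotientGroup.quotientBot.symm.trans e).toEquiv,
      nat_card_alternatingGroup, Nat.card_fin]
    rfl
  have h435 : 435 ∣ 60 := h60 ▸ hH.1
  norm_num at h435
end
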